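/- Let f and g be norms on ℝ^p, let g* denote the dual norm of g, let (a, b) be a linear classifier with a ≠ 0, let ρ > 0, let x_F ∈ ℝ^p satisfy ⟪a, x_F⟫ < b, and let x_RCF be an optimal robust counterfactual of x_F under f with robustness norm g and radius ρ, with x_RCF ≠ x_F. Assume f is differentiable at x_RCF − x_F with gradient h (i.e., HasGradientAt f h (x_RCF − x_F)). Define â := h and b̂ := ⟪â, x_RCF⟫ − ρ · g*(â). Then there exists λ ∈ ℝ with λ ≠ 0 such that â = λ • a and b̂ = λ · b; in other words, a single robust counterfactual query under a differentiable norm, together with the factual label, recovers the hyperplane up to nonzero scaling. -/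

import Mathlib

/-!
For `ρ > 0`, a point `z` is robustly feasible exactly when it lies in the shifted halfspace
`b + ρ g*(a) ≤ ⟪a, z⟫`, so `x_RCF` is an `f`-nearest point of that halfspace to `x_F` and hence
lies on its boundary hyperplane. Minimality along the hyperplane kills the derivative of `f` at
`x_RCF - x_F` in every direction orthogonal to `a`, so `h = λ a`. Euler's identity for the
positively homogeneous `f` gives `λ ⟪a, x_RCF - x_F⟫ = f(x_RCF - x_F) > 0`, so `λ > 0`, hence
`g*(h) = λ g*(a)` and `⟪h, x_RCF⟫ - ρ g*(h) = λ (b + ρ g*(a)) - ρ λ g*(a) = λ b`.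
-/

open RealInnerProductSpace

noncomputable section

/-- `f` is a norm on `EuclideanSpace ℝ (Fin p)`. -/
def IsNormE {p : ℕ} (f : EuclideanSpace ℝ (Fin p) → ℝ) : Prop :=
  (∀ x, f x = 0 ↔ x = 0) ∧ (∀ (c : ℝ) (x : EuclideanSpace ℝ (Fin p)), f (c • x) = |c| * f x) ∧
    (∀ x y, f (x + y) ≤ f x + f y)

/-- The dual norm `g*(w) = sup { ⟪w, v⟫ : g v ≤ 1 }`. -/
def dualNormE {p : ℕ} (g : EuclideanSpace ℝ (Fin p) → ℝ) (w : EuclideanSpace ℝ (Fin p)) : ℝ :=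
  sSup {t : ℝ | ∃ v : EuclideanSpace ℝ (Fin p), g v ≤ 1 ∧ t = ⟪w, v⟫}

/-- `xRCF` is an optimal robust counterfactual of the factual `xF` (classified 'No')
under norm `f`, with robustness norm `g` and radius `ρ`. -/
def IsOptRCFE {p : ℕ} (a : EuclideanSpace ℝ (Fin p)) (b : ℝ)
    (f g : EuclideanSpace ℝ (Fin p) → ℝ) (ρ : ℝ)
    (xF xRCF : EuclideanSpace ℝ (Fin p)) : Prop :=
  (∀ s : EuclideanSpace ℝ (Fin p), g s ≤ ρ → b ≤ ⟪a, xRCF + s⟫) ∧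
    ∀ z : EuclideanSpace ℝ (Fin p),
      (∀ s : EuclideanSpace ℝ (Fin p), g s ≤ ρ → b ≤ ⟪a, z + s⟫) →
        f (xRCF - xF) ≤ f (z - xF)

section Calculus

variable {E : Type*} [NormedAddCommGroup E] [InnerProductSpace ℝ E] [CompleteSpace E]
  {φ : E → ℝ} {h x : E}

theorem HasGradientAt.hasDerivAt_comp_smul_add {t₀ : ℝ} {v : E}
    (hφ : HasGradientAt φ h (t₀ • v + x)) : HasDerivAt (fun t : ℝ => φ (t • v + x)) ⟪h, v⟫ t₀ := by
  have hline : HasDerivAt (fun t : ℝ => t • v + x) v t₀ := by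
    simpa using ((hasDerivAt_id t₀).smul_const v).add_const x
  have hcomp := hφ.hasFDerivAt.comp_hasDerivAt t₀ hline
  simp only [InnerProductSpace.toDual_apply_apply] at hcomp
  exact hcomp

theorem HasGradientAt.mem_span_singleton_of_forall_le {a : E} (hφ : HasGradientAt φ h x)
    (hmin : ∀ v, ⟪a, v⟫ = 0 → φ x ≤ φ (x + v)) : h ∈ ℝ ∙ a := by
  rw [← Submodule.orthogonal_orthogonal (ℝ ∙ a)]
  intro v hv
  have hav : ⟪a, v⟫ = 0 := Submodule.mem_orthogonal_singleton_iff_inner_right.1 hv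
  have hloc : IsLocalMin (fun t : ℝ => φ (t • v + x)) 0 :=
    Filter.Eventually.of_forall fun t => by
      simpa [add_comm] using hmin (t • v) (by rw [real_inner_smul_right, hav, mul_zero])
  have hφ' : HasGradientAt φ h ((0 : ℝ) • v + x) := by simpa using hφ
  rw [real_inner_comm]
  exact hloc.hasDerivAt_eq_zero hφ'.hasDerivAt_comp_smul_add

theorem HasGradientAt.inner_self_eq_of_smul_eq (hφ : HasGradientAt φ h x)
    (hhom : ∀ c : ℝ, 0 < c → φ (c • x) = c * φ x) : ⟪h, x⟫ = φ x := by
  have hray : HasDerivAt (fun t : ℝ => φ (t • x + 0)) ⟪h, x⟫ 1 :=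
    HasGradientAt.hasDerivAt_comp_smul_add (by simpa using hφ)
  have hlin : (fun t : ℝ => φ (t • x + 0)) =ᶠ[nhds 1] fun t : ℝ => t * φ x := by
    filter_upwards [Ioi_mem_nhds one_pos] with t ht
    rw [add_zero, hhom t ht]
  simpa using hray.unique ((hasDerivAt_mul_const (φ x)).congr_of_eventuallyEq hlin)

end Calculus

section Norms

variable {p : ℕ} {f : EuclideanSpace ℝ (Fin p) → ℝ}

theorem IsNormE.map_zero (hf : IsNormE f) : f 0 = 0 :=
  (hf.1 0).2 rfl

theorem IsNormE.nonneg (hf : IsNormE f) (x : EuclideanSpace ℝ (Fin p)) : 0 ≤ f x := by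
  have htri := hf.2.2 x ((-1 : ℝ) • x)
  rw [hf.2.1, neg_one_smul, add_neg_cancel, hf.map_zero] at htri
  norm_num at htri
  linarith

theorem IsNormE.pos (hf : IsNormE f) {x : EuclideanSpace ℝ (Fin p)} (hx : x ≠ 0) : 0 < f x :=
  (hf.nonneg x).lt_of_ne fun h => hx ((hf.1 x).1 h.symm)

theorem IsNormE.inner_eq_of_isMinOn_halfspace (hf : IsNormE f)
    {a xF x : EuclideanSpace ℝ (Fin p)} {c : ℝ} (hxF : ⟪a, xF⟫ < c)
    (hmin : IsMinOn (fun z => f (z - xF)) {z | c ≤ ⟪a, z⟫} x) (hx : c ≤ ⟪a, x⟫) (hne : x ≠ xF) :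
    ⟪a, x⟫ = c := by
  by_contra hxc
  have hlt : c < ⟪a, x⟫ := hx.lt_of_ne (Ne.symm hxc)
  have had : 0 < ⟪a, x - xF⟫ := by rw [inner_sub_right]; linarith
  set t := (c - ⟪a, xF⟫) / ⟪a, x - xF⟫
  have ht0 : 0 < t := div_pos (by linarith) had
  have ht1 : t < 1 := by rw [div_lt_one had, inner_sub_right]; linarith
  have hz : xF + t • (x - xF) ∈ {z | c ≤ ⟪a, z⟫} := by
    simp only [Set.mem_ofPred_eq, inner_add_right, real_inner_smul_right, t,
      div_mul_cancel₀ _ had.ne']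
    linarith
  have hle := hmin hz
  simp only [Set.mem_ofPred_eq, add_sub_cancel_left, hf.2.1, abs_of_pos ht0] at hle
  nlinarith [hf.pos (sub_ne_zero.2 hne)]

end Norms

section DualNorm

open Pointwise

variable {p : ℕ} {g : EuclideanSpace ℝ (Fin p) → ℝ}

theorem dualNormE_smul_of_nonneg {c : ℝ} (hc : 0 ≤ c) (w : EuclideanSpace ℝ (Fin p)) :
    dualNormE g (c • w) = c * dualNormE g w := by
  have hset : {t : ℝ | ∃ v, g v ≤ 1 ∧ t = ⟪c • w, v⟫} =
      c • {t : ℝ | ∃ v, g v ≤ 1 ∧ t = ⟪w, v⟫} := by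
    ext t
    simp [Set.mem_smul_set, real_inner_smul_left, eq_comm]
  rw [dualNormE, hset, Real.sSup_smul_of_nonneg hc, smul_eq_mul, dualNormE]

theorem inner_le_dualNormE {w v : EuclideanSpace ℝ (Fin p)}
    (hbdd : BddAbove {t : ℝ | ∃ v, g v ≤ 1 ∧ t = ⟪w, v⟫}) (hv : g v ≤ 1) :
    ⟪w, v⟫ ≤ dualNormE g w :=
  le_csSup hbdd ⟨v, hv, rfl⟩

theorem dualNormE_le {w : EuclideanSpace ℝ (Fin p)} {C : ℝ} (hg : IsNormE g)
    (hC : ∀ v, g v ≤ 1 → ⟪w, v⟫ ≤ C) : dualNormE g w ≤ C :=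
  csSup_le ⟨0, 0, by simp [hg.map_zero]⟩ fun _ ⟨v, hv, ht⟩ => ht ▸ hC v hv

end DualNorm

section RobustFeasibility

variable {p : ℕ} {a z : EuclideanSpace ℝ (Fin p)} {b ρ : ℝ} {g : EuclideanSpace ℝ (Fin p) → ℝ}

def IsRobustlyFeasible (a : EuclideanSpace ℝ (Fin p)) (b : ℝ) (g : EuclideanSpace ℝ (Fin p) → ℝ)
    (ρ : ℝ) (z : EuclideanSpace ℝ (Fin p)) : Prop :=
  ∀ s, g s ≤ ρ → b ≤ ⟪a, z + s⟫

theorem IsRobustlyFeasible.le_inner (hg : IsNormE g) (hρ : 0 ≤ ρ)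
    (hz : IsRobustlyFeasible a b g ρ z) : b ≤ ⟪a, z⟫ := by
  simpa using hz 0 (hg.map_zero ▸ hρ)

theorem IsRobustlyFeasible.inner_le_div (hg : IsNormE g) (hρ : 0 < ρ)
    (hz : IsRobustlyFeasible a b g ρ z) {v : EuclideanSpace ℝ (Fin p)} (hv : g v ≤ 1) :
    ⟪a, v⟫ ≤ (⟪a, z⟫ - b) / ρ := by
  have hs : g ((-ρ) • v) ≤ ρ := by
    rw [hg.2.1, abs_neg, abs_of_pos hρ]
    exact mul_le_of_le_one_right hρ.le hv
  have := hz _ hs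
  rw [inner_add_right, real_inner_smul_right] at this
  rw [le_div_iff₀' hρ]
  linarith

theorem isRobustlyFeasible_iff (hg : IsNormE g) (hρ : 0 < ρ)
    {z₀ : EuclideanSpace ℝ (Fin p)} (hz₀ : IsRobustlyFeasible a b g ρ z₀) :
    IsRobustlyFeasible a b g ρ z ↔ b + ρ * dualNormE g a ≤ ⟪a, z⟫ := by
  constructor
  · intro hz
    have hdual : dualNormE g a ≤ (⟪a, z⟫ - b) / ρ :=
      dualNormE_le hg fun v hv => hz.inner_le_div hg hρ hv
    rw [le_div_iff₀' hρ] at hdual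
    linarith
  · intro hz s hs
    -- the feasible point `z₀` bounds the set defining `g*(a)`; no compactness is needed
    have hbdd : BddAbove {t : ℝ | ∃ v, g v ≤ 1 ∧ t = ⟪a, v⟫} :=
      ⟨_, fun _ ⟨v, hv, ht⟩ => ht ▸ hz₀.inner_le_div hg hρ hv⟩
    have hv : g ((-ρ⁻¹) • s) ≤ 1 := by
      rw [hg.2.1, abs_neg, abs_of_pos (inv_pos.2 hρ)]
      exact inv_mul_le_one_of_le₀ hs hρ.le
    have hle := mul_le_mul_of_nonneg_left (inner_le_dualNormE hbdd hv) hρ.le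
    have hs' : ⟪a, s⟫ = -(ρ * ⟪a, (-ρ⁻¹) • s⟫) := by
      rw [real_inner_smul_right]
      field_simp
    rw [inner_add_right, hs']
    linarith

end RobustFeasibility

theorem rcf_extraction_differentiable_general {p : ℕ}
    (f g : EuclideanSpace ℝ (Fin p) → ℝ) (hf : IsNormE f) (hg : IsNormE g)
    (a : EuclideanSpace ℝ (Fin p)) (b : ℝ) (ρ : ℝ) (hρ : 0 < ρ)
    (xF xRCF : EuclideanSpace ℝ (Fin p)) (hxF : ⟪a, xF⟫ < b)
    (hopt : IsOptRCFE a b f g ρ xF xRCF) (hne : xRCF ≠ xF)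
    (h : EuclideanSpace ℝ (Fin p)) (hgrad : HasGradientAt f h (xRCF - xF)) :
    ∃ l : ℝ, l ≠ 0 ∧ h = l • a ∧ ⟪h, xRCF⟫ - ρ * dualNormE g h = l * b := by
  obtain ⟨hfeas, hopt⟩ : IsRobustlyFeasible a b g ρ xRCF ∧
      ∀ z, IsRobustlyFeasible a b g ρ z → f (xRCF - xF) ≤ f (z - xF) := hopt
  set c := b + ρ * dualNormE g a
  have hhalf := fun z => isRobustlyFeasible_iff (z := z) hg hρ hfeas
  have hmin : IsMinOn (fun z => f (z - xF)) {z | c ≤ ⟪a, z⟫} xRCF :=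
    fun z hz => hopt z ((hhalf z).2 hz)
  have hxF' : ⟪a, xF⟫ < c :=
    not_le.1 fun hc => hxF.not_ge (((hhalf xF).2 hc).le_inner hg hρ.le)
  have hbdry : ⟪a, xRCF⟫ = c :=
    hf.inner_eq_of_isMinOn_halfspace hxF' hmin ((hhalf xRCF).1 hfeas) hne
  obtain ⟨l, rfl⟩ := Submodule.mem_span_singleton.1 <|
    hgrad.mem_span_singleton_of_forall_le (a := a) fun v hv => by
      have hv' : xRCF + v ∈ {z | c ≤ ⟪a, z⟫} := by simp [inner_add_right, hv, hbdry]
      simpa [sub_add_eq_add_sub] using hmin hv'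
  have heuler : l * ⟪a, xRCF - xF⟫ = f (xRCF - xF) := by
    rw [← real_inner_smul_left]
    exact hgrad.inner_self_eq_of_smul_eq fun c hc => by rw [hf.2.1, abs_of_pos hc]
  have hl : 0 < l := by
    refine pos_of_mul_pos_left (heuler ▸ hf.pos (sub_ne_zero.2 hne)) ?_
    rw [inner_sub_right]
    linarith
  refine ⟨l, hl.ne', rfl, ?_⟩
  rw [dualNormE_smul_of_nonneg hl.le, real_inner_smul_left, hbdry]
  ring

/-- A single robust counterfactual query under a differentiable norm, together with the
factual label, recovers the hyperplane up to nonzero scaling: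
`â = ∇f(x_RCF − x_F)` and `b̂ = ⟪â, x_RCF⟫ − ρ·g*(â)` satisfy `â = λ • a`,
`b̂ = λ * b` for some `λ ≠ 0`. -/
theorem rcf_extraction_differentiable {p : ℕ} (hp : 1 ≤ p)
    (f g : EuclideanSpace ℝ (Fin p) → ℝ) (hf : IsNormE f) (hg : IsNormE g)
    (a : EuclideanSpace ℝ (Fin p)) (ha : a ≠ 0) (b : ℝ) (ρ : ℝ) (hρ : 0 < ρ)
    (xF xRCF : EuclideanSpace ℝ (Fin p)) (hxF : ⟪a, xF⟫ < b)
    (hopt : IsOptRCFE a b f g ρ xF xRCF) (hne : xRCF ≠ xF)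
    (h : EuclideanSpace ℝ (Fin p)) (hgrad : HasGradientAt f h (xRCF - xF)) :
    ∃ l : ℝ, l ≠ 0 ∧ h = l • a ∧ ⟪h, xRCF⟫ - ρ * dualNormE g h = l * b :=
  rcf_extraction_differentiable_general f g hf hg a b ρ hρ xF xRCF hxF hopt hne h hgrad
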